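/- Every finite class Q = {q₁,…,q_m} of probability distributions over ℕ is 3-agnostic PAC learnable in total variation distance with sample complexity m_Q(4ε, δ) ≤ (log(3m²) + log(1/δ)) / (2ε²). -/

import Mathlib

open MeasureTheory Filter

/-- Total variation distance between two distributions over `ℕ`. -/
noncomputable def tv (p q : PMF ℕ) : ℝ :=
  ⨆ A : Set ℕ, |(p.toMeasure A).toReal - (q.toMeasure A).toReal|

/-- The distribution of an i.i.d. sample of size `m` drawn from `q`. -/
noncomputable def iidSample {α : Type*} [MeasurableSpace α] (q : PMF α) (m : ℕ) :
    Measure (Fin m → α) :=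
  Measure.pi fun _ => q.toMeasure

/-- The mixture `(1 - η) δ₀ + η U_A` of the point mass at `0` and the uniform
distribution on the finite set `A` (junk values when `η ∉ [0,1]` or `A = ∅`). -/
noncomputable def mixPMF (η : ℝ) (A : Finset ℕ) : PMF ℕ :=
  (PMF.bernoulli (min (Real.toNNReal η) 1) (min_le_right _ _)).bind fun b =>
    if h : b = true ∧ A.Nonempty then PMF.uniformOfFinset A h.2 else PMF.pure 0

/-- Realizable PAC learnability of a class of distributions over `ℕ` in total
variation distance, witnessed by the learner `A` and sample complexity `mQ`. -/
def RealizablePAC (Q : Set (PMF ℕ)) (A : ∀ m : ℕ, (Fin m → ℕ) → PMF ℕ)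
    (mQ : ℝ → ℝ → ℕ) : Prop :=
  ∀ ε δ : ℝ, 0 < ε → ε < 1 → 0 < δ → δ < 1 → ∀ q ∈ Q, ∀ m ≥ mQ ε δ,
    (iidSample q m) {S | ε < tv (A m S) q} ≤ ENNReal.ofReal δ

/-- 3-agnostic PAC learnability of a class of distributions over `ℕ` in total
variation distance, witnessed by the learner `A` and sample complexity `mQ`. -/
def Agnostic3PAC (Q : Set (PMF ℕ)) (A : ∀ m : ℕ, (Fin m → ℕ) → PMF ℕ)
    (mQ : ℝ → ℝ → ℕ) : Prop :=
  ∀ ε δ : ℝ, 0 < ε → 0 < δ → δ < 1 → ∀ P : PMF ℕ, ∀ m ≥ mQ ε δ,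
    ENNReal.ofReal (1 - δ) ≤
      (iidSample P m) {S | tv (A m S) P ≤ 3 * (⨅ q : Q, tv q.1 P) + ε}

/-! The learner is the Devroye–Lugosi minimum-distance estimate: among the members of `Q`, pick
one whose masses on the Scheffé sets `{x | r' x < r x}`, `r, r' ∈ Q`, are uniformly closest to
the empirical frequencies of these sets. Since `tv p q ≤ p(A) - q(A)` for the Scheffé set `A` of
`p` and `q`, the triangle inequality shows that whenever all these `|Q|²` empirical frequencies
are `ε/2`-accurate the estimate `q̂` satisfies `tv q̂ P ≤ 3 tv q P + ε` for every `q ∈ Q`.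
By Hoeffding's inequality and a union bound this fails with probability at most
`2 |Q|² exp (-n ε² / 2)`, which is at most `δ` once `n ≥ 8 (log (3 |Q|²) + log (1/δ)) / ε²`. -/

open ProbabilityTheory Real
open scoped NNReal

lemma PMF.toMeasure_real_le_of_forall_le {α : Type*} [MeasurableSpace α] {p q : PMF α}
    {s : Set α} (hs : MeasurableSet s) (h : ∀ x ∈ s, p x ≤ q x) :
    p.toMeasure.real s ≤ q.toMeasure.real s := by
  refine ENNReal.toReal_mono (measure_ne_top _ _) ?_
  rw [p.toMeasure_apply hs, q.toMeasure_apply hs]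
  exact ENNReal.tsum_le_tsum fun x => by by_cases hx : x ∈ s <;> simp [hx, h x]

def scheffeSet (p q : PMF ℕ) : Set ℕ := {x | q x < p x}

lemma measureReal_sub_le_scheffeSet (p q : PMF ℕ) (B : Set ℕ) :
    p.toMeasure.real B - q.toMeasure.real B ≤
      p.toMeasure.real (scheffeSet p q) - q.toMeasure.real (scheffeSet p q) := by
  set S := scheffeSet p q
  have hS : MeasurableSet S := .of_discrete
  have hB : MeasurableSet B := .of_discrete
  have h_out : p.toMeasure.real (B \ S) ≤ q.toMeasure.real (B \ S) :=
    PMF.toMeasure_real_le_of_forall_le (hB.diff hS) fun x hx => not_lt.1 hx.2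
  have h_in : q.toMeasure.real (S \ B) ≤ p.toMeasure.real (S \ B) :=
    PMF.toMeasure_real_le_of_forall_le (hS.diff hB) fun x hx => le_of_lt hx.1
  have hpB := measureReal_inter_add_sdiff (μ := p.toMeasure) (s := B) hS
  have hqB := measureReal_inter_add_sdiff (μ := q.toMeasure) (s := B) hS
  have hpS := measureReal_inter_add_sdiff (μ := p.toMeasure) (s := S) hB
  have hqS := measureReal_inter_add_sdiff (μ := q.toMeasure) (s := S) hB
  rw [Set.inter_comm] at hpS hqS
  linarith

lemma abs_measureReal_sub_le_scheffeSet (p q : PMF ℕ) (B : Set ℕ) :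
    |p.toMeasure.real B - q.toMeasure.real B| ≤
      p.toMeasure.real (scheffeSet p q) - q.toMeasure.real (scheffeSet p q) := by
  refine abs_le.2 ⟨?_, measureReal_sub_le_scheffeSet p q B⟩
  have h := measureReal_sub_le_scheffeSet p q Bᶜ
  rw [probReal_compl_eq_one_sub .of_discrete, probReal_compl_eq_one_sub .of_discrete] at h
  linarith

lemma abs_measureReal_sub_le_one {α : Type*} [MeasurableSpace α] (μ ν : Measure α)
    [IsProbabilityMeasure μ] [IsProbabilityMeasure ν] (s : Set α) :
    |μ.real s - ν.real s| ≤ 1 := by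
  have := measureReal_nonneg (μ := μ) (s := s)
  have := measureReal_nonneg (μ := ν) (s := s)
  have := measureReal_le_one (μ := μ) (s := s)
  have := measureReal_le_one (μ := ν) (s := s)
  exact abs_le.2 ⟨by linarith, by linarith⟩

lemma abs_measureReal_sub_le_tv (p q : PMF ℕ) (B : Set ℕ) :
    |p.toMeasure.real B - q.toMeasure.real B| ≤ tv p q :=
  le_ciSup (f := fun B => |p.toMeasure.real B - q.toMeasure.real B|)
    ⟨1, by rintro _ ⟨A, rfl⟩; exact abs_measureReal_sub_le_one _ _ A⟩ B

lemma tv_nonneg (p q : PMF ℕ) : 0 ≤ tv p q :=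
  (abs_nonneg _).trans (abs_measureReal_sub_le_tv p q ∅)

lemma tv_le_one (p q : PMF ℕ) : tv p q ≤ 1 :=
  ciSup_le fun B => abs_measureReal_sub_le_one p.toMeasure q.toMeasure B

lemma tv_triangle (p q r : PMF ℕ) : tv p r ≤ tv p q + tv q r :=
  ciSup_le fun B => (abs_sub_le _ (q.toMeasure.real B) _).trans <|
    add_le_add (abs_measureReal_sub_le_tv p q B) (abs_measureReal_sub_le_tv q r B)

lemma tv_le_scheffeSet (p q : PMF ℕ) :
    tv p q ≤ p.toMeasure.real (scheffeSet p q) - q.toMeasure.real (scheffeSet p q) :=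
  ciSup_le fun B => abs_measureReal_sub_le_scheffeSet p q B

section MinimumDistance

variable (Q : Finset (PMF ℕ)) (hQ : Q.Nonempty)

/-- `ν` stands for the empirical distribution of a sample. -/
noncomputable def scheffeError (ν : Set ℕ → ℝ) (q : PMF ℕ) : ℝ :=
  (Q ×ˢ Q).sup' (hQ.product hQ) fun r =>
    |q.toMeasure.real (scheffeSet r.1 r.2) - ν (scheffeSet r.1 r.2)|

noncomputable def minDistEstimate (ν : Set ℕ → ℝ) : PMF ℕ :=
  (Q.exists_min_image (scheffeError Q hQ ν) hQ).choose

variable {Q}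

lemma minDistEstimate_mem (ν : Set ℕ → ℝ) : minDistEstimate Q hQ ν ∈ Q :=
  (Q.exists_min_image (scheffeError Q hQ ν) hQ).choose_spec.1

lemma scheffeError_minDistEstimate_le (ν : Set ℕ → ℝ) {q : PMF ℕ} (hq : q ∈ Q) :
    scheffeError Q hQ ν (minDistEstimate Q hQ ν) ≤ scheffeError Q hQ ν q :=
  (Q.exists_min_image (scheffeError Q hQ ν) hQ).choose_spec.2 q hq

lemma abs_measureReal_scheffeSet_sub_le_scheffeError (ν : Set ℕ → ℝ) (q : PMF ℕ) {r r' : PMF ℕ}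
    (hr : r ∈ Q) (hr' : r' ∈ Q) :
    |q.toMeasure.real (scheffeSet r r') - ν (scheffeSet r r')| ≤ scheffeError Q hQ ν q :=
  Finset.le_sup' (fun r : PMF ℕ × PMF ℕ =>
    |q.toMeasure.real (scheffeSet r.1 r.2) - ν (scheffeSet r.1 r.2)|)
    (Finset.mem_product.2 ⟨hr, hr'⟩ : (r, r') ∈ Q ×ˢ Q)

variable {ν : Set ℕ → ℝ} {P : PMF ℕ} {η : ℝ}

lemma scheffeError_le_tv_add
    (hν : ∀ r ∈ Q, ∀ r' ∈ Q, |ν (scheffeSet r r') - P.toMeasure.real (scheffeSet r r')| ≤ η)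
    (q : PMF ℕ) : scheffeError Q hQ ν q ≤ tv q P + η :=
  Finset.sup'_le _ _ fun r hr => by
    obtain ⟨hr₁, hr₂⟩ := Finset.mem_product.1 hr
    calc _ ≤ |q.toMeasure.real (scheffeSet r.1 r.2) - P.toMeasure.real (scheffeSet r.1 r.2)|
          + |P.toMeasure.real (scheffeSet r.1 r.2) - ν (scheffeSet r.1 r.2)| := abs_sub_le _ _ _
      _ ≤ tv q P + η := by
          rw [abs_sub_comm _ (ν _)]
          exact add_le_add (abs_measureReal_sub_le_tv q P _) (hν _ hr₁ _ hr₂)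

theorem tv_minDistEstimate_le
    (hν : ∀ r ∈ Q, ∀ r' ∈ Q, |ν (scheffeSet r r') - P.toMeasure.real (scheffeSet r r')| ≤ η)
    {q : PMF ℕ} (hq : q ∈ Q) :
    tv (minDistEstimate Q hQ ν) P ≤ 3 * tv q P + 2 * η := by
  set qe := minDistEstimate Q hQ ν
  set B := scheffeSet qe q
  have hqe : qe ∈ Q := minDistEstimate_mem hQ ν
  have h_est : |qe.toMeasure.real B - ν B| ≤ tv q P + η :=
    (abs_measureReal_scheffeSet_sub_le_scheffeError hQ ν qe hqe hq).trans <|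
      (scheffeError_minDistEstimate_le hQ ν hq).trans (scheffeError_le_tv_add hQ hν q)
  have h_tv : |P.toMeasure.real B - q.toMeasure.real B| ≤ tv q P := by
    rw [abs_sub_comm]; exact abs_measureReal_sub_le_tv q P B
  calc tv qe P ≤ tv qe q + tv q P := tv_triangle qe q P
    _ ≤ qe.toMeasure.real B - q.toMeasure.real B + tv q P := by gcongr; exact tv_le_scheffeSet qe q
    _ = (qe.toMeasure.real B - ν B) + (ν B - P.toMeasure.real B)
          + (P.toMeasure.real B - q.toMeasure.real B) + tv q P := by ring
    _ ≤ |qe.toMeasure.real B - ν B| + |ν B - P.toMeasure.real B|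
          + |P.toMeasure.real B - q.toMeasure.real B| + tv q P := by
        gcongr <;> exact le_abs_self _
    _ ≤ (tv q P + η) + η + tv q P + tv q P := by gcongr; exact hν qe hqe q hq
    _ = 3 * tv q P + 2 * η := by ring

end MinimumDistance

lemma measureReal_pi_abs_sum_ge_le {α : Type*} [MeasurableSpace α] {μ : Measure α}
    [IsProbabilityMeasure μ] {g : α → ℝ} {c : ℝ≥0} (hg : HasSubgaussianMGF g c μ) (n : ℕ)
    {t : ℝ} (ht : 0 ≤ t) :
    (Measure.pi fun _ : Fin n => μ).real {S | t ≤ |∑ i, g (S i)|} ≤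
      2 * exp (-t ^ 2 / (2 * (n * c))) := by
  have tail : ∀ f : α → ℝ, HasSubgaussianMGF f c μ →
      (Measure.pi fun _ : Fin n => μ).real {S | t ≤ ∑ i, f (S i)} ≤
        exp (-t ^ 2 / (2 * (n * c))) := by
    intro f hf
    have h_coord (i : Fin n) :
        HasSubgaussianMGF (fun S : Fin n → α => f (S i)) c (Measure.pi fun _ => μ) :=
      HasSubgaussianMGF.of_map (X := f) (measurable_pi_apply i).aemeasurable
        (by rwa [(measurePreserving_eval (fun _ => μ) i).map_eq])
    have := HasSubgaussianMGF.measure_sum_ge_le_of_iIndepFun (iIndepFun_pi (X := fun _ => f)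
      fun _ => hf.aemeasurable) (c := fun _ => c) (s := Finset.univ) (fun i _ => h_coord i) ht
    simpa using this
  have h_neg := tail (-g) hg.neg
  simp only [Pi.neg_apply, Finset.sum_neg_distrib] at h_neg
  calc (Measure.pi fun _ : Fin n => μ).real {S | t ≤ |∑ i, g (S i)|}
      ≤ (Measure.pi fun _ : Fin n => μ).real
        ({S | t ≤ ∑ i, g (S i)} ∪ {S | t ≤ -∑ i, g (S i)}) := by
        rw [← Set.ofPred_or]
        exact measureReal_mono (Set.ofPred_subset_ofPred.2 fun _ => le_abs.1)
    _ ≤ _ := (measureReal_union_le _ _).trans (by linarith [tail g hg])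

noncomputable def empFreq {α : Type*} {n : ℕ} (S : Fin n → α) (B : Set α) : ℝ :=
  (∑ i, B.indicator 1 (S i)) / n

instance {α : Type*} [MeasurableSpace α] (P : PMF α) (n : ℕ) :
    IsProbabilityMeasure (iidSample P n) := by
  unfold iidSample; infer_instance

lemma iidSample_abs_empFreq_sub_ge_le {α : Type*} [MeasurableSpace α] (P : PMF α) (n : ℕ)
    {B : Set α} (hB : MeasurableSet B) {s : ℝ} (hs : 0 ≤ s) :
    (iidSample P n).real {S | s ≤ |empFreq S B - P.toMeasure.real B|} ≤
      2 * exp (-2 * n * s ^ 2) := by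
  rcases n.eq_zero_or_pos with rfl | hn
  · simpa using measureReal_le_one.trans one_le_two
  have hn' : (0 : ℝ) < n := Nat.cast_pos.2 hn
  set p := P.toMeasure.real B
  have h_subgaussian : HasSubgaussianMGF (fun x => B.indicator 1 x - p) ((‖(1 : ℝ) - 0‖₊ / 2) ^ 2)
      P.toMeasure := by
    have := hasSubgaussianMGF_of_mem_Icc (μ := P.toMeasure) (X := B.indicator 1) (a := 0) (b := 1)
      (measurable_const.indicator hB).aemeasurable
      (ae_of_all _ fun x => by by_cases hx : x ∈ B <;> simp [hx])
    rwa [integral_indicator_one hB] at this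
  have h_sum (S : Fin n → α) : ∑ i, (B.indicator 1 (S i) - p) = n * (empFreq S B - p) := by
    rw [Finset.sum_sub_distrib, empFreq]
    simp only [Finset.sum_const, Finset.card_univ, Fintype.card_fin, nsmul_eq_mul]
    field_simp
  have := measureReal_pi_abs_sum_ge_le h_subgaussian n (t := n * s) (by positivity)
  simp only [h_sum, abs_mul, Nat.abs_cast, mul_le_mul_iff_of_pos_left hn'] at this
  convert this using 3
  · rfl
  · norm_num
    field_simp
    ring

lemma iidSample_exists_abs_empFreq_sub_ge_le {α ι : Type*} [MeasurableSpace α] (P : PMF α)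
    (n : ℕ) (I : Finset ι) {A : ι → Set α} (hA : ∀ i, MeasurableSet (A i)) {s : ℝ}
    (hs : 0 ≤ s) :
    (iidSample P n).real {S | ∃ i ∈ I, s ≤ |empFreq S (A i) - P.toMeasure.real (A i)|} ≤
      I.card * (2 * exp (-2 * n * s ^ 2)) := by
  calc _ = (iidSample P n).real
        (⋃ i ∈ I, {S | s ≤ |empFreq S (A i) - P.toMeasure.real (A i)|}) := by
        congr 1; ext; simp
    _ ≤ ∑ i ∈ I, (iidSample P n).real {S | s ≤ |empFreq S (A i) - P.toMeasure.real (A i)|} :=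
        measureReal_biUnion_finset_le _ _
    _ ≤ ∑ _i ∈ I, 2 * exp (-2 * n * s ^ 2) :=
        Finset.sum_le_sum fun i _ => iidSample_abs_empFreq_sub_ge_le P n (hA i) hs
    _ = _ := by rw [Finset.sum_const, nsmul_eq_mul]

noncomputable def sampleSize (m : ℕ) (ε δ : ℝ) : ℕ :=
  ⌊8 * (log (3 * m ^ 2) + log (1 / δ)) / ε ^ 2⌋₊

lemma two_thirds_le_log_add_log {m : ℕ} (hm : 0 < m) {δ : ℝ} (hδ : 0 < δ) (hδ1 : δ ≤ 1) :
    2 / 3 ≤ log (3 * m ^ 2) + log (1 / δ) := by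
  have hm' : (1 : ℝ) ≤ m := Nat.one_le_cast.2 hm
  have h3 : 1 - 3⁻¹ ≤ log 3 := one_sub_inv_le_log_of_pos three_pos
  have h3m : log 3 ≤ log (3 * m ^ 2) := log_le_log three_pos (by nlinarith)
  have hδ' : 0 ≤ log (1 / δ) := log_nonneg (by rw [le_div_iff₀ hδ]; linarith)
  linarith

lemma sampleSize_four_mul_le {m : ℕ} (hm : 0 < m) {ε δ : ℝ} (hε : 0 < ε) (hδ : 0 < δ)
    (hδ1 : δ ≤ 1) :
    (sampleSize m (4 * ε) δ : ℝ) ≤ (log (3 * m ^ 2) + log (1 / δ)) / (2 * ε ^ 2) := by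
  have := two_thirds_le_log_add_log hm hδ hδ1
  refine (Nat.floor_le (by positivity)).trans (le_of_eq ?_)
  field_simp
  ring

lemma sq_mul_two_mul_exp_le_of_sampleSize_le {m n : ℕ} (hm : 0 < m) {ε δ : ℝ} (hε : 0 < ε)
    (hε1 : ε ≤ 1) (hδ : 0 < δ) (hδ1 : δ ≤ 1) (hn : sampleSize m ε δ ≤ n) :
    (m : ℝ) ^ 2 * (2 * exp (-2 * n * (ε / 2) ^ 2)) ≤ δ := by
  set L := log (3 * m ^ 2) + log (1 / δ)
  have hL := two_thirds_le_log_add_log hm hδ hδ1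
  have h_floor : 8 * L / ε ^ 2 < n + 1 :=
    (Nat.lt_floor_add_one _).trans_le (by exact_mod_cast Nat.add_le_add_right hn 1)
  have h_exponent : L ≤ 2 * n * (ε / 2) ^ 2 := by
    rw [div_lt_iff₀ (by positivity)] at h_floor
    nlinarith
  have hm' : (0 : ℝ) < m := Nat.cast_pos.2 hm
  have h_expL : exp (-L) = δ / (3 * m ^ 2) := by
    rw [neg_add, exp_add, exp_neg, exp_neg, exp_log (by positivity), exp_log (by positivity)]
    field_simp
  calc (m : ℝ) ^ 2 * (2 * exp (-2 * n * (ε / 2) ^ 2))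
      ≤ m ^ 2 * (2 * exp (-L)) := by gcongr; linarith
    _ = 2 / 3 * δ := by rw [h_expL]; field_simp
    _ ≤ δ := by linarith

lemma ofReal_one_sub_le_of_compl_subset {α : Type*} [MeasurableSpace α] {μ : Measure α}
    [IsProbabilityMeasure μ] {s t : Set α} (hst : sᶜ ⊆ t) {δ : ℝ} (ht : μ.real t ≤ δ) :
    ENNReal.ofReal (1 - δ) ≤ μ s := by
  have h_cover : 1 ≤ μ s + μ t :=
    calc 1 = μ Set.univ := measure_univ.symm
      _ ≤ μ (s ∪ t) := measure_mono fun x _ => (em (x ∈ s)).imp_right (hst ·)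
      _ ≤ μ s + μ t := measure_union_le s t
  have ht' : μ t ≤ ENNReal.ofReal δ := by
    rw [← ofReal_measureReal]; exact ENNReal.ofReal_le_ofReal ht
  rw [ENNReal.ofReal_sub _ (measureReal_nonneg.trans ht), ENNReal.ofReal_one, tsub_le_iff_right]
  exact h_cover.trans (add_le_add_right ht' _)

/-- Every finite class of distributions over `ℕ` is 3-agnostic PAC learnable
in total variation distance with sample complexity
`m_Q(4ε, δ) ≤ (log (3 m²) + log (1/δ)) / (2 ε²)`. -/
theorem finite_class_agnostic_learnable (Q : Finset (PMF ℕ)) (hQ : Q.Nonempty) :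
    ∃ (A : ∀ m : ℕ, (Fin m → ℕ) → PMF ℕ) (mQ : ℝ → ℝ → ℕ),
      Agnostic3PAC ↑Q A mQ ∧
      ∀ ε δ : ℝ, 0 < ε → 0 < δ → δ < 1 →
        (mQ (4 * ε) δ : ℝ) ≤
          (Real.log (3 * (Q.card : ℝ) ^ 2) + Real.log (1 / δ)) / (2 * ε ^ 2) := by
  have hm : 0 < Q.card := hQ.card_pos
  refine ⟨fun _ S => minDistEstimate Q hQ (empFreq S), sampleSize Q.card, ?_,
    fun ε δ hε hδ hδ1 => sampleSize_four_mul_le hm hε hδ hδ1.le⟩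
  intro ε δ hε hδ hδ1 P n hn
  obtain ⟨q, hq, hq_min⟩ := Q.exists_min_image (tv · P) hQ
  have : Nonempty (Q : Set (PMF ℕ)) := ⟨⟨q, hq⟩⟩
  have h_inf : tv q P ≤ ⨅ r : (Q : Set (PMF ℕ)), tv r.1 P := le_ciInf fun r => hq_min r.1 r.2
  rcases lt_or_ge 1 ε with hε1 | hε1
  · refine (ENNReal.ofReal_le_one.2 (by linarith)).trans
      (measure_univ.symm.trans_le (measure_mono fun S _ => ?_))
    exact Set.mem_ofPred.2 <| by
      linarith [tv_le_one (minDistEstimate Q hQ (empFreq S)) P, tv_nonneg q P]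
  refine ofReal_one_sub_le_of_compl_subset (t := {S | ∃ r ∈ Q ×ˢ Q,
    ε / 2 ≤ |empFreq S (scheffeSet r.1 r.2) - P.toMeasure.real (scheffeSet r.1 r.2)|}) ?_ ?_
  · refine Set.compl_subset_comm.1 fun S h_good => ?_
    simp only [Set.mem_compl_iff, Set.mem_ofPred_eq, not_exists, not_and, not_le] at h_good
    have := tv_minDistEstimate_le hQ (ν := empFreq S)
      (fun r hr r' hr' => (h_good (r, r') (Finset.mem_product.2 ⟨hr, hr'⟩)).le) hq
    exact Set.mem_ofPred.2 (by linarith)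
  · calc _ ≤ (Q ×ˢ Q).card * (2 * exp (-2 * n * (ε / 2) ^ 2)) :=
          iidSample_exists_abs_empFreq_sub_ge_le P n _ (fun _ => .of_discrete) (by positivity)
      _ ≤ δ := by
          rw [Finset.card_product, Nat.cast_mul, ← sq]
          exact sq_mul_two_mul_exp_le_of_sampleSize_le hm hε hε1 hδ hδ1.le hn
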